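/- arXiv:1608.06091 — 7 statements merged into one kernel-verified Lean document; each statement's English description precedes it below -/
import Mathlib

section
/- If a graph G has a linear order L on its vertices such that no rainbow of size k+1 exists with respect to L (a rainbow of size k being a set of k edges pairwise nested under each other), then G admits a queue layout with at most k queues using L as the linear order. -/
open SimpleGraph

/-- Edge `e'` is (strictly) nested inside edge `e` with respect to the vertex order `f`. -/
def NestedIn {V : Type*} (f : V → ℕ) (e e' : Sym2 V) : Prop :=
  ∃ u v u' v', e = s(u, v) ∧ e' = s(u', v') ∧
    f u < f u' ∧ f u' < f v' ∧ f v' < f v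

/-- Two edges are nested (one inside the other) with respect to the vertex order `f`. -/
def NestedPair {V : Type*} (f : V → ℕ) (e e' : Sym2 V) : Prop :=
  NestedIn f e e' ∨ NestedIn f e' e

/-- `f` (an injective map to `ℕ`, i.e. a linear order on the vertices) together with the
queue assignment `c` is a queue layout of `G` with at most `q` queues: edges in the same
queue are never nested. -/
def IsQueueLayout {V : Type*} (G : SimpleGraph V) (f : V → ℕ) (q : ℕ)
    (c : Sym2 V → ℕ) : Prop :=
  Function.Injective f ∧ (∀ e ∈ G.edgeSet, c e < q) ∧
    ∀ e ∈ G.edgeSet, ∀ e' ∈ G.edgeSet, c e = c e' → ¬ NestedPair f e e'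

/-- `G` admits a queue layout with at most `q` queues. -/
def HasQueueLayout {V : Type*} (G : SimpleGraph V) (q : ℕ) : Prop :=
  ∃ f c, IsQueueLayout G f q c

/-- The queue-number of `G`. -/
noncomputable def queueNumber {V : Type*} (G : SimpleGraph V) : ℕ :=
  sInf {q | HasQueueLayout G q}

/-- There exist `m` edges of `G` forming a rainbow (pairwise nested family)
`a 0 < a 1 < ⋯ < a (m-1) < b (m-1) < ⋯ < b 1 < b 0` with respect to `f`. -/
def Rainbow {V : Type*} (G : SimpleGraph V) (f : V → ℕ) (m : ℕ) : Prop :=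
  ∃ a b : Fin m → V, (∀ i, G.Adj (a i) (b i)) ∧
    (∀ i j, i < j → f (a i) < f (a j)) ∧
    (∀ i j, i < j → f (b j) < f (b i)) ∧
    (∀ i j, f (a i) < f (b j))

/-- `G` admits a track layout with at most `t` tracks: a partition of the vertices into
independent tracks, linearly ordered (via the global injective order `f`), with no
X-crossing between any two tracks. -/
def HasTrackLayout {V : Type*} (G : SimpleGraph V) (t : ℕ) : Prop :=
  ∃ (track : V → ℕ) (f : V → ℕ), Function.Injective f ∧
    (∀ v, track v < t) ∧
    (∀ u v, G.Adj u v → track u ≠ track v) ∧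
    (∀ a b c d, G.Adj a b → G.Adj c d → track a = track c → track b = track d →
      f a < f c → ¬ f d < f b)

/-- The track-number of `G`. -/
noncomputable def trackNumber {V : Type*} (G : SimpleGraph V) : ℕ :=
  sInf {t | HasTrackLayout G t}

/-- `G` is a `k`-tree (Reed's definition): it can be built from the empty graph by
repeatedly adding a vertex whose neighbourhood at the time of addition is a clique of
size at most `k`.  Equivalently (for finite graphs), there is a construction order `f`
in which the earlier neighbourhood of every vertex is a clique of size at most `k`. -/
def IsKTree {V : Type*} (k : ℕ) (G : SimpleGraph V) : Prop :=
  ∃ f : V → ℕ, Function.Injective f ∧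
    ∀ v, G.IsClique {u | G.Adj u v ∧ f u < f v} ∧
      {u | G.Adj u v ∧ f u < f v}.ncard ≤ k

/-- `G` has tree-width at most `k`, i.e. it is a (spanning) subgraph of a `k`-tree. -/
def TreewidthAtMost {V : Type*} (G : SimpleGraph V) (k : ℕ) : Prop :=
  ∃ H : SimpleGraph V, G ≤ H ∧ IsKTree k H

/-- `G` has an acyclic coloring with at most `n` colors: a proper coloring such that the
union of any two color classes induces a forest. -/
def HasAcyclicColoring {V : Type*} (G : SimpleGraph V) (n : ℕ) : Prop :=
  ∃ c : V → ℕ, (∀ v, c v < n) ∧ (∀ u v, G.Adj u v → c u ≠ c v) ∧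
    ∀ i j, (G.induce {v | c v = i ∨ c v = j}).IsAcyclic

/-- A rainbow of size `m + 1` whose outermost edge is `e`. -/
def RainbowAt {V : Type*} (G : SimpleGraph V) (f : V → ℕ) (e : Sym2 V) (m : ℕ) : Prop :=
  ∃ a b : Fin (m + 1) → V, (∀ i, G.Adj (a i) (b i)) ∧
    (∀ i j, i < j → f (a i) < f (a j)) ∧
    (∀ i j, i < j → f (b j) < f (b i)) ∧
    (∀ i j, f (a i) < f (b j)) ∧ s(a 0, b 0) = e

lemma rainbowAt_zero {V : Type*} {G : SimpleGraph V} {f : V → ℕ}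
    (hf : Function.Injective f) {e : Sym2 V} (he : e ∈ G.edgeSet) :
    RainbowAt G f e 0 := by
  induction e using Sym2.inductionOn with
  | hf u v =>
    rw [SimpleGraph.mem_edgeSet] at he
    rcases lt_or_gt_of_ne (fun hfv : f u = f v => he.ne (hf hfv)) with hlt | hlt
    · exact ⟨fun _ => u, fun _ => v, fun _ => he,
        fun i j hij => by have := j.isLt; rw [Fin.lt_def] at hij; omega,
        fun i j hij => by have := j.isLt; rw [Fin.lt_def] at hij; omega,
        fun _ _ => hlt, rfl⟩
    · exact ⟨fun _ => v, fun _ => u, fun _ => he.symm,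
        fun i j hij => by have := j.isLt; rw [Fin.lt_def] at hij; omega,
        fun i j hij => by have := j.isLt; rw [Fin.lt_def] at hij; omega,
        fun _ _ => hlt, Sym2.eq_swap⟩

lemma rainbowAt_lt {V : Type*} {G : SimpleGraph V} {f : V → ℕ} {k : ℕ}
    (h : ¬ Rainbow G f (k + 1)) {e : Sym2 V} {m : ℕ} (hm : RainbowAt G f e m) :
    m < k := by
  by_contra hmk
  push_neg at hmk
  obtain ⟨a, b, h1, h2, h3, h4, _⟩ := hm
  have hle : k + 1 ≤ m + 1 := by omega
  refine h ⟨a ∘ Fin.castLE hle, b ∘ Fin.castLE hle, fun i => h1 _, ?_, ?_, fun i j => h4 _ _⟩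
  · exact fun i j hij => h2 _ _ (by simp only [Fin.lt_def, Fin.coe_castLE]; exact hij)
  · exact fun i j hij => h3 _ _ (by simp only [Fin.lt_def, Fin.coe_castLE]; exact hij)

lemma rainbowAt_succ {V : Type*} {G : SimpleGraph V} {f : V → ℕ}
    {e e' : Sym2 V} (he : e ∈ G.edgeSet) (hn : NestedIn f e e') {m : ℕ}
    (hm : RainbowAt G f e' m) : RainbowAt G f e (m + 1) := by
  obtain ⟨u, v, u', v', heq, heq', h1, h2, h3⟩ := hn
  obtain ⟨a, b, r1, r2, r3, r4, r5⟩ := hm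
  -- identify a 0 = u', b 0 = v' at the level of f-values
  have key : f (a 0) = f u' ∧ f (b 0) = f v' := by
    rw [heq', Sym2.eq_iff] at r5
    rcases r5 with ⟨ha, hb⟩ | ⟨ha, hb⟩
    · rw [ha, hb]; exact ⟨rfl, rfl⟩
    · exfalso; have := r4 0 0; rw [ha, hb] at this; omega
  have ha0 : ∀ j, f (a 0) ≤ f (a j) := by
    intro j
    rcases eq_or_ne j 0 with hj | hj
    · rw [hj]
    · exact (r2 0 j (Fin.pos_of_ne_zero hj)).le
  have hb0 : ∀ j, f (b j) ≤ f (b 0) := by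
    intro j
    rcases eq_or_ne j 0 with hj | hj
    · rw [hj]
    · exact (r3 0 j (Fin.pos_of_ne_zero hj)).le
  rw [heq, SimpleGraph.mem_edgeSet] at he
  have huv : f u < f v := by have := ha0 0; have := hb0 0; omega
  refine ⟨Fin.cases u a, Fin.cases v b, ?_, ?_, ?_, ?_, by simp [heq]⟩
  · intro i
    induction i using Fin.cases with
    | zero => simpa using he
    | succ i => simpa using r1 i
  · intro i j hij
    induction i using Fin.cases with
    | zero =>
      induction j using Fin.cases with
      | zero => exact absurd hij (lt_irrefl _)
      | succ j => simpa using lt_of_lt_of_le (key.1 ▸ h1) (ha0 j)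
    | succ i =>
      induction j using Fin.cases with
      | zero => exact absurd hij (by simp [Fin.lt_def])
      | succ j => simpa using r2 i j (Fin.succ_lt_succ_iff.mp hij)
  · intro i j hij
    induction i using Fin.cases with
    | zero =>
      induction j using Fin.cases with
      | zero => exact absurd hij (lt_irrefl _)
      | succ j => simpa using lt_of_le_of_lt (key.2 ▸ hb0 j) h3
    | succ i =>
      induction j using Fin.cases with
      | zero => exact absurd hij (by simp [Fin.lt_def])
      | succ j => simpa using r3 i j (Fin.succ_lt_succ_iff.mp hij)
  · intro i j
    induction i using Fin.cases with
    | zero =>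
      induction j using Fin.cases with
      | zero => simpa using huv
      | succ j =>
        have := r4 0 j
        have := ha0 0
        simp only [Fin.cases_zero, Fin.cases_succ]
        omega
    | succ i =>
      induction j using Fin.cases with
      | zero =>
        have := r4 i 0
        have := hb0 0
        simp only [Fin.cases_zero, Fin.cases_succ]
        omega
      | succ j => simpa using r4 i j

/-- If `G` has no rainbow of size `k+1` with respect to the linear order `f`, then `G`
has a queue layout using at most `k` queues with `f` as the linear order. -/
theorem stmt_0 {V : Type*} [Fintype V] (G : SimpleGraph V) (k : ℕ) (f : V → ℕ)
    (hf : Function.Injective f) (h : ¬ Rainbow G f (k + 1)) :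
    ∃ c : Sym2 V → ℕ, IsQueueLayout G f k c := by
  set c : Sym2 V → ℕ := fun e => sSup {m | RainbowAt G f e m} with hc
  have hbdd : ∀ e : Sym2 V, BddAbove {m | RainbowAt G f e m} :=
    fun e => ⟨k, fun m hm => (rainbowAt_lt h hm).le⟩
  have hmem : ∀ e ∈ G.edgeSet, c e ∈ {m | RainbowAt G f e m} := by
    intro e he
    exact Nat.sSup_mem ⟨0, rainbowAt_zero hf he⟩ (hbdd e)
  refine ⟨c, hf, fun e he => rainbowAt_lt h (hmem e he), ?_⟩
  intro e he e' he' hcc hn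
  have step : ∀ e₁ ∈ G.edgeSet, ∀ e₂ ∈ G.edgeSet, NestedIn f e₁ e₂ → c e₂ < c e₁ := by
    intro e₁ he₁ e₂ he₂ h12
    have : c e₂ + 1 ∈ {m | RainbowAt G f e₁ m} :=
      rainbowAt_succ he₁ h12 (hmem e₂ he₂)
    calc c e₂ < c e₂ + 1 := Nat.lt_succ_self _
      _ ≤ c e₁ := le_csSup (hbdd e₁) this
  rcases hn with h1 | h1
  · exact absurd hcc (step e he e' he' h1).ne'
  · exact absurd hcc (step e' he' e he h1).ne
end

section
/- The queue-number of a graph G equals the minimum over all linear orders L of V(G) of the maximum size of a rainbow in L. -/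
open SimpleGraph

section Aux

variable {V : Type*} [Fintype V] (G : SimpleGraph V) (f : V → ℕ)

/-- A rainbow of size `m+1` whose outermost edge is `e`. -/
def RainbowFrom (e : Sym2 V) (m : ℕ) : Prop :=
  ∃ a b : Fin (m + 1) → V, (∀ i, G.Adj (a i) (b i)) ∧
    (∀ i j, i < j → f (a i) < f (a j)) ∧
    (∀ i j, i < j → f (b j) < f (b i)) ∧
    (∀ i j, f (a i) < f (b j)) ∧ s(a 0, b 0) = e

lemma rainbow_le_card {m : ℕ} (h : Rainbow G f m) : m ≤ Fintype.card V := by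
  obtain ⟨a, b, -, hmono, -, -⟩ := h
  have hinj : Function.Injective a := by
    intro i j hij
    by_contra hne
    rcases lt_or_gt_of_ne hne with h | h
    · exact absurd (congrArg f hij) (ne_of_lt (hmono i j h))
    · exact absurd (congrArg f hij).symm (ne_of_lt (hmono j i h))
  simpa using Fintype.card_le_of_injective a hinj

lemma rainbowFrom_rainbow {e : Sym2 V} {m : ℕ} (h : RainbowFrom G f e m) :
    Rainbow G f (m + 1) := by
  obtain ⟨a, b, h1, h2, h3, h4, -⟩ := h
  exact ⟨a, b, h1, h2, h3, h4⟩

lemma bddAbove_rainbow : BddAbove {m | Rainbow G f m} :=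
  ⟨Fintype.card V, fun m hm => rainbow_le_card G f hm⟩

lemma bddAbove_rainbowFrom (e : Sym2 V) : BddAbove {m | RainbowFrom G f e m} :=
  ⟨Fintype.card V, fun m hm => Nat.le_of_succ_le (rainbow_le_card G f
    (rainbowFrom_rainbow G f hm))⟩

lemma rainbowFrom_zero (hf : Function.Injective f) {e : Sym2 V} (he : e ∈ G.edgeSet) :
    RainbowFrom G f e 0 := by
  induction e with
  | h x y =>
    rw [SimpleGraph.mem_edgeSet] at he
    have hne : f x ≠ f y := fun h => G.ne_of_adj he (hf h)
    rcases lt_or_gt_of_ne hne with h | h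
    · exact ⟨fun _ => x, fun _ => y, fun _ => he,
        fun i j hij => absurd hij (by omega),
        fun i j hij => absurd hij (by omega), fun _ _ => h, rfl⟩
    · exact ⟨fun _ => y, fun _ => x, fun _ => he.symm,
        fun i j hij => absurd hij (by omega),
        fun i j hij => absurd hij (by omega), fun _ _ => h,
        Sym2.eq_swap⟩

lemma rainbowFrom_extend {e e' : Sym2 V} (he : e ∈ G.edgeSet)
    (hnest : NestedIn f e e') {m : ℕ} (h : RainbowFrom G f e' m) :
    RainbowFrom G f e (m + 1) := by
  obtain ⟨u, v, u', v', heq, heq', h1, h2, h3⟩ := hnest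
  obtain ⟨a, b, hadj, hamono, hbmono, hcross, h0⟩ := h
  -- identify a 0 = u', b 0 = v'
  have hab : a 0 = u' ∧ b 0 = v' := by
    rw [heq'] at h0
    rcases Sym2.eq_iff.mp h0 with ⟨hx, hy⟩ | ⟨hx, hy⟩
    · exact ⟨hx, hy⟩
    · exfalso
      have := hcross 0 0
      rw [hx, hy] at this
      omega
  have ha0 : f (a 0) = f u' := by rw [hab.1]
  have hb0 : f (b 0) = f v' := by rw [hab.2]
  have huv : G.Adj u v := by rw [heq, SimpleGraph.mem_edgeSet] at he; exact he
  have ha0le : ∀ k : Fin (m + 1), f (a 0) ≤ f (a k) := by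
    intro k
    rcases eq_or_lt_of_le (Fin.zero_le k) with hk | hk
    · rw [← hk]
    · exact le_of_lt (hamono 0 k hk)
  have hb0le : ∀ k : Fin (m + 1), f (b k) ≤ f (b 0) := by
    intro k
    rcases eq_or_lt_of_le (Fin.zero_le k) with hk | hk
    · rw [← hk]
    · exact le_of_lt (hbmono 0 k hk)
  refine ⟨Fin.cases u (fun i => a i), Fin.cases v (fun i => b i), ?_, ?_, ?_, ?_, ?_⟩
  · intro i
    induction i using Fin.cases with
    | zero => exact huv
    | succ i => exact hadj i
  · intro i j hij
    induction i using Fin.cases with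
    | zero =>
      induction j using Fin.cases with
      | zero => exact absurd hij (lt_irrefl _)
      | succ j =>
        simp only [Fin.cases_zero, Fin.cases_succ]
        calc f u < f u' := h1
        _ = f (a 0) := ha0.symm
        _ ≤ f (a j) := ha0le j
    | succ i =>
      induction j using Fin.cases with
      | zero => exact absurd hij (by rw [Fin.lt_iff_val_lt_val]; simp)
      | succ j =>
        simp only [Fin.cases_succ]
        exact hamono i j (by
          have : (i : ℕ) + 1 < (j : ℕ) + 1 := hij
          exact (Fin.lt_iff_val_lt_val).mpr (by omega))
  · intro i j hij
    induction i using Fin.cases with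
    | zero =>
      induction j using Fin.cases with
      | zero => exact absurd hij (lt_irrefl _)
      | succ j =>
        simp only [Fin.cases_zero, Fin.cases_succ]
        calc f (b j) ≤ f (b 0) := hb0le j
        _ = f v' := hb0
        _ < f v := h3
    | succ i =>
      induction j using Fin.cases with
      | zero => exact absurd hij (by rw [Fin.lt_iff_val_lt_val]; simp)
      | succ j =>
        simp only [Fin.cases_succ]
        exact hbmono i j (by
          have : (i : ℕ) + 1 < (j : ℕ) + 1 := hij
          exact (Fin.lt_iff_val_lt_val).mpr (by omega))
  · intro i j
    induction i using Fin.cases with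
    | zero =>
      induction j using Fin.cases with
      | zero =>
        simp only [Fin.cases_zero]
        omega
      | succ j =>
        simp only [Fin.cases_zero, Fin.cases_succ]
        calc f u < f u' := h1
        _ = f (a 0) := ha0.symm
        _ < f (b j) := hcross 0 j
    | succ i =>
      induction j using Fin.cases with
      | zero =>
        simp only [Fin.cases_zero, Fin.cases_succ]
        calc f (a i) < f (b i) := hcross i i
        _ ≤ f (b 0) := hb0le i
        _ = f v' := hb0
        _ < f v := h3
      | succ j =>
        simp only [Fin.cases_succ]
        exact hcross i j
  · simp only [Fin.cases_zero]
    exact heq.symm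

/-- The height coloring: a queue layout with `sSup {m | Rainbow G f m}` queues. -/
lemma hasQueueLayout_of_injective (hf : Function.Injective f) :
    ∃ c, IsQueueLayout G f (sSup {m | Rainbow G f m}) c := by
  classical
  set d : Sym2 V → ℕ := fun e => sSup {m | RainbowFrom G f e m} with hd
  have hmem : ∀ e ∈ G.edgeSet, RainbowFrom G f e (d e) := fun e he =>
    Nat.sSup_mem (s := {m | RainbowFrom G f e m}) ⟨0, rainbowFrom_zero G f hf he⟩
      (bddAbove_rainbowFrom G f e)
  refine ⟨d, hf, ?_, ?_⟩
  · intro e he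
    have h1 : Rainbow G f (d e + 1) := rainbowFrom_rainbow G f (hmem e he)
    have := le_csSup (bddAbove_rainbow G f) h1
    omega
  · intro e he e' he' hcc hpair
    have key : ∀ x y : Sym2 V, x ∈ G.edgeSet → y ∈ G.edgeSet → NestedIn f x y →
        d y < d x := by
      intro x y hx hy hn
      have h1 : RainbowFrom G f x (d y + 1) := rainbowFrom_extend G f hx hn (hmem y hy)
      have h2 : d y + 1 ≤ d x := le_csSup (bddAbove_rainbowFrom G f x) h1
      omega
    rcases hpair with hn | hn
    · exact absurd hcc (ne_of_gt (key e e' he he' hn))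
    · exact absurd hcc (ne_of_lt (key e' e he' he hn))

/-- Pigeonhole: any rainbow size is at most the number of queues of a layout on `f`. -/
lemma rainbow_le_queues {q : ℕ} {c : Sym2 V → ℕ} (hL : IsQueueLayout G f q c)
    {m : ℕ} (h : Rainbow G f m) : m ≤ q := by
  obtain ⟨hf, hlt, hnn⟩ := hL
  obtain ⟨a, b, hadj, hamono, hbmono, hcross⟩ := h
  by_contra hqm
  push_neg at hqm
  have hE : ∀ i : Fin m, s(a i, b i) ∈ G.edgeSet := fun i =>
    (G.mem_edgeSet).mpr (hadj i)
  have : ∃ i j : Fin m, i ≠ j ∧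
      (⟨c s(a i, b i), hlt _ (hE i)⟩ : Fin q) = ⟨c s(a j, b j), hlt _ (hE j)⟩ := by
    apply Fintype.exists_ne_map_eq_of_card_lt
    simpa using hqm
  obtain ⟨i, j, hne, hcc⟩ := this
  have hcc' : c s(a i, b i) = c s(a j, b j) := congrArg Fin.val hcc
  rcases lt_or_gt_of_ne hne with hij | hij
  · exact hnn _ (hE i) _ (hE j) hcc'
      (Or.inl ⟨a i, b i, a j, b j, rfl, rfl, hamono i j hij, hcross j j, hbmono i j hij⟩)
  · exact hnn _ (hE j) _ (hE i) hcc'.symm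
      (Or.inl ⟨a j, b j, a i, b i, rfl, rfl, hamono j i hij, hcross i i, hbmono j i hij⟩)

end Aux

/-- The queue-number of `G` equals the minimum over all linear orders `f` of the
maximum size of a rainbow in `f`. -/
theorem stmt_1 {V : Type*} [Fintype V] (G : SimpleGraph V) :
    queueNumber G =
      sInf ((fun f => sSup {m | Rainbow G f m}) '' {f : V → ℕ | Function.Injective f}) := by
  classical
  obtain ⟨f₀, hf₀⟩ : ∃ f₀ : V → ℕ, Function.Injective f₀ := by
    have : Countable V := Finite.to_countable
    exact this.exists_injective_nat
  have hSne : ((fun f => sSup {m | Rainbow G f m}) ''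
      {f : V → ℕ | Function.Injective f}).Nonempty := ⟨_, ⟨f₀, hf₀, rfl⟩⟩
  have hQne : {q | HasQueueLayout G q}.Nonempty := by
    obtain ⟨c, hc⟩ := hasQueueLayout_of_injective G f₀ hf₀
    exact ⟨_, f₀, c, hc⟩
  apply le_antisymm
  · -- queueNumber ≤ sInf S
    apply le_csInf hSne
    rintro _ ⟨f, hf, rfl⟩
    obtain ⟨c, hc⟩ := hasQueueLayout_of_injective G f hf
    exact Nat.sInf_le ⟨f, c, hc⟩
  · -- sInf S ≤ queueNumber
    obtain ⟨f, c, hL⟩ := Nat.sInf_mem hQne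
    calc sInf ((fun f => sSup {m | Rainbow G f m}) '' {f : V → ℕ | Function.Injective f})
        ≤ sSup {m | Rainbow G f m} := Nat.sInf_le ⟨f, hL.1, rfl⟩
      _ ≤ queueNumber G := csSup_le ⟨0, ⟨Fin.elim0, Fin.elim0, fun i => i.elim0,
          fun i => i.elim0, fun i => i.elim0, fun i => i.elim0⟩⟩
          (fun m hm => rainbow_le_queues G f hL hm)
end

section
/- For every graph G, qn(G) ≤ tn(G) - 1, i.e., if G admits a track layout with t tracks, then G admits a queue layout with at most t-1 queues. -/
open SimpleGraph

lemma track_layout_exists {V : Type*} [Fintype V] (G : SimpleGraph V) :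
    HasTrackLayout G (Fintype.card V) := by
  classical
  let e := Fintype.equivFin V
  refine ⟨fun v => (e v : ℕ), fun v => (e v : ℕ),
    fun a b h => e.injective (Fin.val_injective h), ?_, ?_, ?_⟩
  · intro v; exact (e v).isLt
  · intro u v huv h
    exact G.ne_of_adj huv (e.injective (Fin.val_injective h))
  · intro a b c d _ _ hac _ hlt
    have : a = c := e.injective (Fin.val_injective hac)
    subst this
    exact absurd hlt (lt_irrefl _)

lemma track_to_queue {V : Type*} [Fintype V] (G : SimpleGraph V) (t : ℕ)
    (h : HasTrackLayout G t) : HasQueueLayout G (t - 1) := by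
  classical
  obtain ⟨track, f, hf, hlt, hne, hx⟩ := h
  set N : ℕ := (Finset.univ.sup f) + 1 with hN
  have hfN : ∀ v, f v < N := fun v =>
    Nat.lt_succ_of_le (Finset.le_sup (Finset.mem_univ v))
  set g : V → ℕ := fun v => track v * N + f v with hg
  have gmono : ∀ {x y}, track x < track y → g x < g y := by
    intro x y hxy
    have : track x * N + f x < (track x + 1) * N := by
      have := hfN x; nlinarith
    calc g x < (track x + 1) * N := this
    _ ≤ track y * N := Nat.mul_le_mul_right N hxy
    _ ≤ g y := Nat.le_add_right _ _
  have gtrack : ∀ {x y}, g x < g y → track x ≤ track y := by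
    intro x y hxy
    by_contra hc
    exact absurd (gmono (Nat.lt_of_not_le hc)) (Nat.lt_asymm hxy)
  have ginj : Function.Injective g := by
    intro x y hxy
    rcases lt_trichotomy (track x) (track y) with h1 | h1 | h1
    · exact absurd hxy (Nat.ne_of_lt (gmono h1))
    · apply hf; simp only [hg] at hxy; rw [h1] at hxy; omega
    · exact absurd hxy.symm (Nat.ne_of_lt (gmono h1))
  set c : Sym2 V → ℕ := Sym2.lift ⟨fun x y =>
    max (track x) (track y) - min (track x) (track y) - 1, by
      intro x y; simp [max_comm, min_comm]⟩ with hc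
  refine ⟨g, c, ginj, ?_, ?_⟩
  · intro e he
    induction e with
    | _ u v =>
      rw [SimpleGraph.mem_edgeSet] at he
      have h1 := hlt u
      have h2 := hlt v
      have h3 := hne u v he
      simp only [hc, Sym2.lift_mk]
      omega
  · have key : ∀ e ∈ G.edgeSet, ∀ e' ∈ G.edgeSet, c e = c e' → ¬ NestedIn g e e' := by
      intro e he e' he' hcc hnest
      obtain ⟨u, v, u', v', rfl, rfl, h1, h2, h3⟩ := hnest
      rw [SimpleGraph.mem_edgeSet] at he he'
      simp only [hc, Sym2.lift_mk] at hcc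
      have t1 : track u ≤ track u' := gtrack h1
      have t2 : track u' ≤ track v' := gtrack h2
      have t3 : track v' ≤ track v := gtrack h3
      have n1 : track u ≠ track v := hne u v he
      have n2 : track u' ≠ track v' := hne u' v' he'
      have e1 : track u = track u' := by omega
      have e2 : track v = track v' := by omega
      have fu : f u < f u' := by
        have h1' := h1; simp only [hg] at h1'; rw [e1] at h1'; omega
      have fv : f v' < f v := by
        have h3' := h3; simp only [hg] at h3'; rw [e2] at h3'; omega
      exact hx u v u' v' he he' e1 e2 fu fv
    intro e he e' he' hcc hp
    rcases hp with hp | hp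
    · exact key e he e' he' hcc hp
    · exact key e' he' e he hcc.symm hp

/-- For every graph `G`, the queue-number is at most the track-number minus one. -/
theorem stmt_6 {V : Type*} [Fintype V] (G : SimpleGraph V) :
    queueNumber G ≤ trackNumber G - 1 := by
  have hne : {t | HasTrackLayout G t}.Nonempty :=
    ⟨Fintype.card V, track_layout_exists G⟩
  have ht : HasTrackLayout G (trackNumber G) := Nat.sInf_mem hne
  exact Nat.sInf_le (track_to_queue G _ ht)
end

section
/- Every graph of tree-width at most k has acyclic chromatic number at most k+1. -/
/-!
Colour the vertices greedily along the construction order of the `k`-tree: every vertex has at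
most `k` earlier neighbours, so `k + 1` colours suffice. Two earlier neighbours of a vertex are
adjacent, so the three get distinct colours; hence inside the union of two colour classes every
vertex has at most one earlier neighbour. Such a graph is a forest, since the latest vertex of a
cycle would have two earlier neighbours on it.
-/

open SimpleGraph

theorem Nat.sInf_compl_le_ncard {s : Set ℕ} (hs : s.Finite) : sInf sᶜ ≤ s.ncard := by
  obtain ⟨n, hn, hns⟩ : ∃ n ≤ s.ncard, n ∉ s := by
    by_contra! h
    have := Set.ncard_le_ncard (fun n hn => h n (Set.mem_Iic.mp hn)) hs
    simp at this
  exact (Nat.sInf_le hns).trans hn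

namespace SimpleGraph

variable {V α : Type*}

def earlierNeighborSet [LT α] (G : SimpleGraph V) (f : V → α) (v : V) : Set V :=
  {u | G.Adj u v ∧ f u < f v}

theorem isAcyclic_of_subsingleton_earlierNeighborSet [LinearOrder α] {G : SimpleGraph V}
    {f : V → α} (hf : Function.Injective f) (h : ∀ v, (G.earlierNeighborSet f v).Subsingleton) :
    G.IsAcyclic := by
  classical
  intro v p hp
  obtain ⟨m, hm, hmax⟩ := Set.exists_max_image {x | x ∈ p.support} f
    p.support.finite_toSet ⟨v, p.start_mem_support⟩
  set c := p.rotate m hm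
  have hc : c.IsCycle := hp.rotate hm
  have hlt : ∀ i, G.Adj (c.getVert i) m → f (c.getVert i) < f m := fun i hadj =>
    lt_of_le_of_ne (hmax _ ((p.mem_support_rotate_iff m hm).mp (c.getVert_mem_support i)))
      (fun he => hadj.ne (hf he))
  have hsnd : G.Adj c.snd m := (c.adj_snd hc.not_nil).symm
  have hpen : G.Adj c.penultimate m := c.adj_penultimate hc.not_nil
  exact hc.snd_ne_penultimate (h m ⟨hsnd, hlt 1 hsnd⟩ ⟨hpen, hlt _ hpen⟩)

theorem finite_earlierNeighborSet (G : SimpleGraph V) {f : V → ℕ} (hf : Function.Injective f)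
    (v : V) : (G.earlierNeighborSet f v).Finite :=
  ((Set.finite_Iio (f v)).preimage hf.injOn).subset fun _ hu => hu.2

noncomputable def greedyColoring (G : SimpleGraph V) (f : V → ℕ) (v : V) : ℕ :=
  sInf {n | ∀ u ∈ G.earlierNeighborSet f v, greedyColoring G f u ≠ n}
termination_by f v
decreasing_by exact ‹_ ∈ G.earlierNeighborSet f v›.2

theorem greedyColoring_eq (G : SimpleGraph V) (f : V → ℕ) (v : V) :
    G.greedyColoring f v = sInf (G.greedyColoring f '' G.earlierNeighborSet f v)ᶜ := by
  rw [greedyColoring]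
  congr 1
  ext n
  simp

theorem greedyColoring_le_ncard {G : SimpleGraph V} {f : V → ℕ} (hf : Function.Injective f)
    (v : V) : G.greedyColoring f v ≤ (G.earlierNeighborSet f v).ncard := by
  have hfin := G.finite_earlierNeighborSet hf v
  rw [greedyColoring_eq]
  exact (Nat.sInf_compl_le_ncard (hfin.image _)).trans (Set.ncard_image_le hfin)

theorem greedyColoring_ne_of_mem_earlierNeighborSet {G : SimpleGraph V} {f : V → ℕ}
    (hf : Function.Injective f) {u v : V} (hu : u ∈ G.earlierNeighborSet f v) :
    G.greedyColoring f u ≠ G.greedyColoring f v := by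
  have hfree : G.greedyColoring f v ∉ G.greedyColoring f '' G.earlierNeighborSet f v := by
    rw [greedyColoring_eq]
    exact Nat.sInf_mem ((G.finite_earlierNeighborSet hf v).image _).infinite_compl.nonempty
  exact fun he => hfree ⟨u, hu, he⟩

theorem greedyColoring_ne_of_adj {G : SimpleGraph V} {f : V → ℕ} (hf : Function.Injective f)
    {u v : V} (hadj : G.Adj u v) : G.greedyColoring f u ≠ G.greedyColoring f v := by
  rcases lt_or_gt_of_ne (hf.ne hadj.ne) with hlt | hlt
  · exact greedyColoring_ne_of_mem_earlierNeighborSet hf ⟨hadj, hlt⟩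
  · exact (greedyColoring_ne_of_mem_earlierNeighborSet hf ⟨hadj.symm, hlt⟩).symm

theorem isAcyclic_induce_two_colors_of_isClique_earlierNeighborSet [LinearOrder α]
    {G H : SimpleGraph V} (hGH : G ≤ H) {f : V → α} (hf : Function.Injective f)
    (hcl : ∀ v, H.IsClique (H.earlierNeighborSet f v)) {c : V → ℕ}
    (hc : ∀ u v, H.Adj u v → c u ≠ c v) (i j : ℕ) :
    (G.induce {v | c v = i ∨ c v = j}).IsAcyclic := by
  refine isAcyclic_of_subsingleton_earlierNeighborSet (f := f ∘ Subtype.val)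
    (hf.comp Subtype.val_injective) ?_
  rintro ⟨v, hv⟩ ⟨u, hu⟩ ⟨huv, hu_lt⟩ ⟨w, hw⟩ ⟨hwv, hw_lt⟩
  have huv' : H.Adj u v := hGH huv
  have hwv' : H.Adj w v := hGH hwv
  by_contra hne
  have huw : H.Adj u w := hcl v ⟨huv', hu_lt⟩ ⟨hwv', hw_lt⟩ fun he => hne (Subtype.ext he)
  have := hc u v huv'
  have := hc w v hwv'
  have := hc u w huw
  simp only [Set.mem_ofPred_eq] at hu hv hw
  omega

end SimpleGraph

theorem stmt_8_general {V : Type*} (k : ℕ) (G : SimpleGraph V)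
    (h : TreewidthAtMost G k) :
    HasAcyclicColoring G (k + 1) := by
  obtain ⟨H, hGH, f, hf, hH⟩ := h
  refine ⟨H.greedyColoring f, fun v => ?_, fun u v huv => greedyColoring_ne_of_adj hf (hGH huv),
    isAcyclic_induce_two_colors_of_isClique_earlierNeighborSet hGH hf (fun v => (hH v).1)
      fun u v => greedyColoring_ne_of_adj hf⟩
  exact Nat.lt_succ_of_le ((greedyColoring_le_ncard hf v).trans (hH v).2)

/-- Every graph of tree-width at most `k` has acyclic chromatic number at most `k+1`. -/
theorem stmt_8 {V : Type*} [Fintype V] (k : ℕ) (G : SimpleGraph V)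
    (h : TreewidthAtMost G k) :
    HasAcyclicColoring G (k + 1) :=
  stmt_8_general k G h
end

section
/- The complete graph K_n has queue-number exactly ⌊n/2⌋. -/
open SimpleGraph

/-- The complete graph on `n` vertices has queue-number exactly `⌊n/2⌋`. -/
theorem stmt_14 (n : ℕ) : queueNumber (⊤ : SimpleGraph (Fin n)) = n / 2 := by
  have hub : HasQueueLayout (⊤ : SimpleGraph (Fin n)) (n / 2) := by
    refine ⟨Fin.val,
      Sym2.lift ⟨fun a b => (max a.val b.val - min a.val b.val - 1) / 2, ?_⟩,
      Fin.val_injective, ?_, ?_⟩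
    · intro a b; simp [max_comm, min_comm]
    · intro e he
      induction e using Sym2.ind with
      | _ u v =>
        rw [SimpleGraph.mem_edgeSet, SimpleGraph.top_adj] at he
        have huv : u.val ≠ v.val := fun h => he (Fin.val_injective h)
        have h1 := u.isLt; have h2 := v.isLt
        simp only [Sym2.lift_mk]
        omega
    · intro e he e' he' hc hnp
      rcases hnp with ⟨a, b, a', b', hea, heb, h1, h2, h3⟩ |
        ⟨a, b, a', b', hea, heb, h1, h2, h3⟩
      · subst hea; subst heb
        simp only [Sym2.lift_mk] at hc
        omega
      · subst hea; subst heb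
        simp only [Sym2.lift_mk] at hc
        omega
  have hlb : ∀ q ∈ {q | HasQueueLayout (⊤ : SimpleGraph (Fin n)) q}, n / 2 ≤ q := by
    rintro q ⟨f, c, hf, hcq, hnn⟩
    by_cases hn2 : n / 2 = 0
    · omega
    set s : Finset ℕ := Finset.image f Finset.univ with hs
    have hcard : s.card = n := by
      rw [hs, Finset.card_image_of_injective _ hf, Finset.card_univ, Fintype.card_fin]
    set φ := s.orderIsoOfFin hcard with hφ
    have hmem : ∀ i : Fin n, ∃ x : Fin n, f x = (φ i : ℕ) := by
      intro i
      have hm : ((φ i : ℕ)) ∈ Finset.image f Finset.univ := by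
        rw [← hs]; exact (φ i).2
      obtain ⟨x, -, hx⟩ := Finset.mem_image.mp hm
      exact ⟨x, hx⟩
    choose w hw using hmem
    have hwmono : ∀ i j : Fin n, i < j → f (w i) < f (w j) := by
      intro i j hij
      rw [hw, hw]
      exact Subtype.coe_lt_coe.mpr (φ.strictMono hij)
    have hn1 : 1 ≤ n := by omega
    -- rainbow edges
    have hia : ∀ i : Fin (n / 2), i.val < n := fun i => by omega
    have hib : ∀ i : Fin (n / 2), n - 1 - i.val < n := fun i => by omega
    set A : Fin (n / 2) → Fin n := fun i => w ⟨i.val, hia i⟩ with hA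
    set B : Fin (n / 2) → Fin n := fun i => w ⟨n - 1 - i.val, hib i⟩ with hB
    have hAB : ∀ i : Fin (n / 2), f (A i) < f (B i) := by
      intro i
      apply hwmono
      have := i.isLt
      simp only [Fin.mk_lt_mk]
      omega
    have hedge : ∀ i : Fin (n / 2), s(A i, B i) ∈ (⊤ : SimpleGraph (Fin n)).edgeSet := by
      intro i
      rw [SimpleGraph.mem_edgeSet, SimpleGraph.top_adj]
      intro h
      exact absurd (congrArg f h) (ne_of_lt (hAB i))
    have hnest : ∀ i j : Fin (n / 2), i < j →
        NestedIn f s(A i, B i) s(A j, B j) := by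
      intro i j hij
      refine ⟨A i, B i, A j, B j, rfl, rfl, ?_, hAB j, ?_⟩
      · exact hwmono _ _ (by simpa using hij)
      · apply hwmono
        have h1 := j.isLt
        have h2 : i.val < j.val := hij
        simp only [Fin.mk_lt_mk]
        omega
    have hinj : Function.Injective (fun i : Fin (n / 2) =>
        (⟨c s(A i, B i), hcq _ (hedge i)⟩ : Fin q)) := by
      intro i j hij
      simp only [Fin.mk.injEq] at hij
      by_contra hne
      rcases lt_or_gt_of_ne hne with h | h
      · exact hnn _ (hedge i) _ (hedge j) hij (Or.inl (hnest i j h))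
      · exact hnn _ (hedge j) _ (hedge i) hij.symm (Or.inl (hnest j i h))
    have := Fintype.card_le_of_injective _ hinj
    simpa using this
  have hne : {q | HasQueueLayout (⊤ : SimpleGraph (Fin n)) q}.Nonempty := ⟨n / 2, hub⟩
  exact le_antisymm (Nat.sInf_le hub) (le_csInf hne hlb)
end

section
/- Let L be a linear order arising from a lexicographic BFS of a tree-partition as in the construction: if interbag edges uv and u'v' (with u<v, u'<v' in L, and u,u' at smaller depth than v,v' respectively) are nested in L, then u and u' lie in the same bag of the tree-partition. -/
open SimpleGraph

/-- In a linear order arising from a lexicographic BFS of a rooted tree-partition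
(nodes ordered by `g`, compatibly with parents; vertices ordered by `f`, compatibly with
the node order on bags), if two interbag edges `uv` and `u'v'` (each going from a parent
bag to a child bag) are nested, then `u` and `u'` lie in the same bag. -/
theorem stmt_17 {V ι : Type*} (G : SimpleGraph V) (b : V → ι) (parent : ι → ι)
    (g : ι → ℕ) (f : V → ℕ)
    (hg : Function.Injective g)
    (hlex : ∀ x y : ι, g (parent x) < g (parent y) → g x < g y)
    (hcons : ∀ u v : V, g (b u) < g (b v) → f u < f v)
    (u v u' v' : V)
    (huv : G.Adj u v) (hbag : b u ≠ b v) (hpar : parent (b v) = b u)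
    (huv' : G.Adj u' v') (hbag' : b u' ≠ b v') (hpar' : parent (b v') = b u')
    (h1 : f u < f u') (h2 : f u' < f v') (h3 : f v' < f v) :
    b u = b u' := by
  apply hg
  have hle : g (b u) ≤ g (b u') := by
    by_contra h
    exact absurd (hcons u' u (lt_of_not_ge h)) (not_lt.mpr h1.le)
  rcases lt_or_eq_of_le hle with hlt | heq
  · exfalso
    have : g (parent (b v)) < g (parent (b v')) := by rw [hpar, hpar']; exact hlt
    exact absurd (hcons v v' (hlex _ _ this)) (not_lt.mpr h3.le)
  · exact heq
end

section
/- Let v_1 < ... < v_k < p_k < ... < p_1 < v_{k+1} < q_k < ... < q_1 be vertices in a linear order, where for each i the pairs p_i v_i and q_i v_i are edges, and v_{k+1} is adjacent to all of v_1,...,v_k. Then for any new vertex w adjacent to all of v_1, v_3, v_4, ..., v_{k+1} that is placed to the left of v_{k+1} in the order, the resulting layout contains a rainbow of size k+1. -/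
open SimpleGraph

/-- In the configuration `v_1 < ⋯ < v_k < p_k < ⋯ < p_1 < v_{k+1} < q_k < ⋯ < q_1`
(with edges `p_i v_i`, `q_i v_i`, and `v_{k+1}` adjacent to `v_1, …, v_k`), any new
vertex `w` adjacent to `v_1, v_3, v_4, …, v_{k+1}` that is placed to the left of
`v_{k+1}` creates a rainbow of size `k + 1`.  Here `v i`, `p i`, `q i` denote
`v_{i+1}`, `p_{i+1}`, `q_{i+1}`. -/
theorem stmt_19 {V : Type*} (G : SimpleGraph V) (f : V → ℕ)
    (hf : Function.Injective f) (k : ℕ) (hk : 2 ≤ k)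
    (v : Fin (k + 1) → V) (p q : Fin k → V) (w : V)
    (hv : ∀ i j : Fin (k + 1), i < j → f (v i) < f (v j))
    (hp : ∀ i j : Fin k, i < j → f (p j) < f (p i))
    (hq : ∀ i j : Fin k, i < j → f (q j) < f (q i))
    (hvp : ∀ i j : Fin k, f (v i.castSucc) < f (p j))
    (hpv : ∀ i : Fin k, f (p i) < f (v (Fin.last k)))
    (hvq : ∀ i : Fin k, f (v (Fin.last k)) < f (q i))
    (hpe : ∀ i : Fin k, G.Adj (p i) (v i.castSucc))
    (hqe : ∀ i : Fin k, G.Adj (q i) (v i.castSucc))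
    (hlast : ∀ i : Fin k, G.Adj (v (Fin.last k)) (v i.castSucc))
    (hw1 : G.Adj w (v 0))
    (hw2 : ∀ i : Fin (k + 1), 2 ≤ (i : ℕ) → G.Adj w (v i))
    (hwleft : f w < f (v (Fin.last k)))
    (hwne : ∀ i, f w ≠ f (v i)) :
    Rainbow G f (k + 1) := by
  classical
  have hklt : k < k + 1 := Nat.lt_succ_self k
  have hlastv : (⟨k, hklt⟩ : Fin (k+1)) = Fin.last k := rfl
  have hP : ∃ n, ∃ hn : n < k + 1, f w < f (v ⟨n, hn⟩) :=
    ⟨k, hklt, by rw [hlastv]; exact hwleft⟩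
  obtain ⟨hJlt, hJw⟩ := Nat.find_spec hP
  set J := Nat.find hP with hJdef
  have hJle : J ≤ k := Nat.find_le ⟨hklt, by rw [hlastv]; exact hwleft⟩
  have hvmono : ∀ (m n : ℕ) (hm : m < k+1) (hn : n < k+1), m ≤ n →
      f (v ⟨m, hm⟩) ≤ f (v ⟨n, hn⟩) := by
    intro m n hm hn hmn
    rcases eq_or_lt_of_le hmn with h | h
    · subst h; exact le_rfl
    · exact le_of_lt (hv _ _ h)
  have hwlt : ∀ (n : ℕ) (hn : n < k+1), J ≤ n → f w < f (v ⟨n, hn⟩) :=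
    fun n hn h => lt_of_lt_of_le hJw (hvmono J n hJlt hn h)
  have hltw : ∀ (n : ℕ) (hn : n < k+1), n < J → f (v ⟨n, hn⟩) < f w := by
    intro n hn h
    have hmin := Nat.find_min hP h
    have h1 : ¬ f w < f (v ⟨n, hn⟩) := fun hc => hmin ⟨hn, hc⟩
    exact lt_of_le_of_ne (not_lt.mp h1) (fun he => hwne ⟨n, hn⟩ he.symm)
  set A : Fin (k+1) → V := fun i =>
    if _ : (i:ℕ) < J then v i
    else if _ : (i:ℕ) = J then w
    else v ⟨(i:ℕ)-1, by have := i.2; omega⟩ with hAdef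
  set B : Fin (k+1) → V := fun i =>
    if h : (i:ℕ) < J then q ⟨i, by omega⟩
    else if _ : (i:ℕ) = J then v (Fin.last k)
    else p ⟨(i:ℕ)-1, by have := i.2; omega⟩ with hBdef
  have hAlt : ∀ (i : Fin (k+1)) (h : (i:ℕ) < J), A i = v i := by
    intro i h; simp only [hAdef, dif_pos h]
  have hAeq : ∀ (i : Fin (k+1)) (h : (i:ℕ) = J), A i = w := by
    intro i h; simp only [hAdef]; rw [dif_neg (by omega), dif_pos h]
  have hAgt : ∀ (i : Fin (k+1)) (h : J < (i:ℕ)),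
      A i = v ⟨(i:ℕ)-1, by have := i.2; omega⟩ := by
    intro i h; simp only [hAdef]; rw [dif_neg (by omega), dif_neg (by omega)]
  have hBlt : ∀ (i : Fin (k+1)) (h : (i:ℕ) < J), B i = q ⟨i, by omega⟩ := by
    intro i h; simp only [hBdef, dif_pos h]
  have hBeq : ∀ (i : Fin (k+1)) (h : (i:ℕ) = J), B i = v (Fin.last k) := by
    intro i h; simp only [hBdef]; rw [dif_neg (by omega), dif_pos h]
  have hBgt : ∀ (i : Fin (k+1)) (h : J < (i:ℕ)),
      B i = p ⟨(i:ℕ)-1, by have := i.2; omega⟩ := by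
    intro i h; simp only [hBdef]; rw [dif_neg (by omega), dif_neg (by omega)]
  refine ⟨A, B, ?_, ?_, ?_, ?_⟩
  · intro i
    rcases lt_trichotomy (i:ℕ) J with h | h | h
    · rw [hAlt i h, hBlt i h]
      have := (hqe ⟨i, by omega⟩).symm
      have hc : ((⟨(i:ℕ), by omega⟩ : Fin k).castSucc) = i := by
        ext; simp [Fin.castSucc, Fin.castAdd, Fin.castLE]
      rwa [hc] at this
    · rw [hAeq i h, hBeq i h]
      exact hw2 (Fin.last k) (by simp [Fin.last]; omega)
    · rw [hAgt i h, hBgt i h]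
      have := (hpe ⟨(i:ℕ)-1, by have := i.2; omega⟩).symm
      have hc : ((⟨(i:ℕ)-1, by have := i.2; omega⟩ : Fin k).castSucc)
          = (⟨(i:ℕ)-1, by have := i.2; omega⟩ : Fin (k+1)) := by
        ext; simp [Fin.castSucc, Fin.castAdd, Fin.castLE]
      rwa [hc] at this
  · intro i j hij
    have hij' : (i:ℕ) < (j:ℕ) := hij
    rcases lt_trichotomy (i:ℕ) J with h1 | h1 | h1 <;>
      rcases lt_trichotomy (j:ℕ) J with h2 | h2 | h2 <;>
      try omega
    · rw [hAlt i h1, hAlt j h2]; exact hv i j hij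
    · rw [hAlt i h1, hAeq j h2]
      have : f (v ⟨(i:ℕ), i.2⟩) < f w := hltw (i:ℕ) i.2 h1
      simpa using this
    · rw [hAlt i h1, hAgt j h2]
      have : f (v ⟨(i:ℕ), i.2⟩) < f (v ⟨(j:ℕ)-1, by have := j.2; omega⟩) :=
        hv _ _ (by simp only [Fin.lt_def, Fin.mk_lt_mk]; omega)
      simpa using this
    · rw [hAeq i h1, hAgt j h2]
      exact hwlt _ _ (by omega)
    · rw [hAgt i h1, hAgt j h2]
      exact hv _ _ (by simp only [Fin.lt_def, Fin.mk_lt_mk]; omega)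
  · intro i j hij
    have hij' : (i:ℕ) < (j:ℕ) := hij
    rcases lt_trichotomy (i:ℕ) J with h1 | h1 | h1 <;>
      rcases lt_trichotomy (j:ℕ) J with h2 | h2 | h2 <;>
      try omega
    · rw [hBlt i h1, hBlt j h2]; exact hq _ _ (by simp only [Fin.lt_def, Fin.mk_lt_mk]; omega)
    · rw [hBlt i h1, hBeq j h2]; exact hvq _
    · rw [hBlt i h1, hBgt j h2]; exact lt_trans (hpv _) (hvq _)
    · rw [hBeq i h1, hBgt j h2]; exact hpv _
    · rw [hBgt i h1, hBgt j h2]; exact hp _ _ (by simp only [Fin.lt_def, Fin.mk_lt_mk]; omega)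
  · intro i j
    have hA' : ∃ m : ℕ, ∃ hm : m < k, A i = v ⟨m, by omega⟩ ∨ (A i = w ∧ (i:ℕ) = J) := by
      rcases lt_trichotomy (i:ℕ) J with h | h | h
      · exact ⟨(i:ℕ), by omega, Or.inl (by rw [hAlt i h])⟩
      · exact ⟨0, by omega, Or.inr ⟨hAeq i h, h⟩⟩
      · exact ⟨(i:ℕ)-1, by have := i.2; omega, Or.inl (hAgt i h)⟩
    obtain ⟨m, hm, hA'⟩ := hA'
    have key : ∀ x, (x = v ⟨m, by omega⟩ ∨ (x = w ∧ (i:ℕ) = J)) → f x < f (B j) := by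
      intro x hx
      rcases lt_trichotomy (j:ℕ) J with h2 | h2 | h2
      · rw [hBlt j h2]
        rcases hx with hx | ⟨hx, _⟩
        · rw [hx]
          exact lt_trans (hv _ _ (by simp only [Fin.lt_def, Fin.last, Fin.mk_lt_mk]; omega)) (hvq _)
        · rw [hx]; exact lt_trans hwleft (hvq _)
      · rw [hBeq j h2]
        rcases hx with hx | ⟨hx, _⟩
        · rw [hx]; exact hv _ _ (by simp only [Fin.lt_def, Fin.last, Fin.mk_lt_mk]; omega)
        · rw [hx]; exact hwleft
      · rw [hBgt j h2]
        rcases hx with hx | ⟨hx, hiJ⟩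
        · rw [hx]
          have := hvp ⟨m, hm⟩ ⟨(j:ℕ)-1, by have := j.2; omega⟩
          have hc : ((⟨m, hm⟩ : Fin k).castSucc) = (⟨m, by omega⟩ : Fin (k+1)) := by
            ext; simp [Fin.castSucc, Fin.castAdd, Fin.castLE]
          rwa [hc] at this
        · rw [hx]
          have hJk : J < k := by have := j.2; omega
          have h1 : f w < f (v ⟨J, by omega⟩) := hwlt J (by omega) le_rfl
          have h2 : f (v ⟨J, by omega⟩) < f (p ⟨(j:ℕ)-1, by have := j.2; omega⟩) := by
            have := hvp ⟨J, hJk⟩ ⟨(j:ℕ)-1, by have := j.2; omega⟩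
            have hc : ((⟨J, hJk⟩ : Fin k).castSucc) = (⟨J, by omega⟩ : Fin (k+1)) := by
              ext; simp [Fin.castSucc, Fin.castAdd, Fin.castLE]
            rwa [hc] at this
          exact lt_trans h1 h2
    exact key (A i) hA'
end
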